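/- Under the hypotheses of the generalized Azuma inequality, the random variable ξ_n satisfies log E[exp(λξ_n)] ≤ φ_p(λ (γ_r^r + d_0^r)^{1/r}) for all λ ∈ ℝ, i.e. τ_{φ_p}(ξ_n) ≤ (γ_r^r + d_0^r)^{1/r}. -/

import Mathlib

/-!
Conditioning on `ℱ k` and bounding `exp` by its chord on `[-d_{k+1}, d_{k+1}]` gives Hoeffding's
step `E[exp (λ ξ_{k+1})] ≤ exp (λ² d_{k+1}² / 2) E[exp (λ ξ_k)]`, hence
`cgf ξ_n λ ≤ λ² c² / 2 + cgf ξ_0 λ`, while `|ξ_n - ξ_0| ≤ d` gives `cgf ξ_n λ ≤ |λ| d + cgf ξ_0 λ`.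

The constant `γ_r` is chosen so that `λ ↦ φ_p (γ_r λ)` meets `min (λ² c² / 2) (λ d)` at its kink
`λ₀ = 2d/c²`. Since `φ_p(t)/t` is nondecreasing and, for `p ≤ 2`, `φ_p(t)/t²` is nonincreasing,
`φ_p (γ_r λ)` dominates the minimum on both sides of the kink (for `p ≥ 2`, `γ_2 = c` and
`φ_p(t) ≥ t²/2`). Finally `φ_p(t)/t^r` is nondecreasing, which gives
`φ_p x + φ_p y ≤ φ_p ((x^r + y^r)^(1/r))` and absorbs the term `φ_p (d₀ λ)` coming from `ξ_0`.
-/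

open MeasureTheory Real Filter

noncomputable def phi (p x : ℝ) : ℝ :=
  if |x| ≤ 1 then x ^ 2 / 2 else |x| ^ p / p - 1 / p + 1 / 2

noncomputable def gam (r c d : ℝ) : ℝ :=
  c ^ 2 / (2 * d) * (r * (2 * (d / c) ^ 2 + 1 / r - 1 / 2)) ^ (1 / r)

open ProbabilityTheory Set

lemma rpow_add_mul_sub_le_rpow {a b q : ℝ} (ha : 0 < a) (hb : 0 ≤ b) (hq : 1 ≤ q) :
    a ^ q + q * a ^ (q - 1) * (b - a) ≤ b ^ q := by
  have h := one_add_mul_self_le_rpow_one_add (s := b / a - 1)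
    (by linarith [div_nonneg hb ha.le]) hq
  rw [add_sub_cancel, div_rpow hb ha.le, le_div_iff₀ (rpow_pos_of_pos ha q)] at h
  have ha' : a ^ q = a ^ (q - 1) * a := by rw [← rpow_add_one ha.ne']; ring_nf
  calc a ^ q + q * a ^ (q - 1) * (b - a) = (1 + q * (b / a - 1)) * a ^ q := by
        rw [ha']; field_simp
    _ ≤ b ^ q := h

lemma add_le_of_monotoneOn_div_rpow {f : ℝ → ℝ} {r x y : ℝ} (hr : 0 < r) (hf0 : f 0 = 0)
    (hf : MonotoneOn (fun t => f t / t ^ r) (Ioi 0)) (hx : 0 ≤ x) (hy : 0 ≤ y) :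
    f x + f y ≤ f ((x ^ r + y ^ r) ^ (1 / r)) := by
  have hxr := rpow_nonneg hx r
  have hyr := rpow_nonneg hy r
  rcases (add_nonneg hxr hyr).eq_or_lt with h0 | hpos
  · obtain ⟨hx0, hy0⟩ := (add_eq_zero_iff_of_nonneg hxr hyr).1 h0.symm
    rw [rpow_eq_zero hx hr.ne'] at hx0
    rw [rpow_eq_zero hy hr.ne'] at hy0
    simp [hx0, hy0, hf0, zero_rpow hr.ne', zero_rpow (inv_ne_zero hr.ne')]
  set s := (x ^ r + y ^ r) ^ (1 / r)
  have hs : 0 < s := rpow_pos_of_pos hpos _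
  have hsr : s ^ r = x ^ r + y ^ r := by
    rw [← rpow_mul hpos.le, one_div_mul_cancel hr.ne', rpow_one]
  have key : ∀ z, 0 ≤ z → z ^ r ≤ s ^ r → f z ≤ z ^ r / s ^ r * f s := by
    intro z hz hzs
    rcases hz.eq_or_lt with rfl | hz
    · simp [hf0, zero_rpow hr.ne']
    have hmono := hf hz hs ((rpow_le_rpow_iff hz.le hs.le hr).1 hzs)
    have hzr := rpow_pos_of_pos hz r
    simp only at hmono
    rw [div_le_iff₀ hzr, div_mul_eq_mul_div, mul_comm] at hmono
    rwa [div_mul_eq_mul_div]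
  calc f x + f y ≤ x ^ r / s ^ r * f s + y ^ r / s ^ r * f s :=
        add_le_add (key x hx (by linarith)) (key y hy (by linarith))
    _ = f s := by
      rw [← add_mul, ← add_div, ← hsr, div_self (rpow_pos_of_pos hs r).ne', one_mul]

section Phi

variable {p t : ℝ}

lemma phi_abs (p x : ℝ) : phi p |x| = phi p x := by
  simp [phi]

lemma phi_zero : phi p 0 = 0 := by
  simp [phi]

lemma phi_of_le_one (ht : 0 ≤ t) (h : t ≤ 1) : phi p t = t ^ 2 / 2 := by
  rw [phi, abs_of_nonneg ht, if_pos h]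

lemma phi_of_one_le (h : 1 ≤ t) : phi p t = t ^ p / p - 1 / p + 1 / 2 := by
  rcases h.eq_or_lt with rfl | h
  · simp [phi]
  · rw [phi, abs_of_pos (by linarith), if_neg h.not_ge]

lemma phi_nonneg (hp : 0 < p) (x : ℝ) : 0 ≤ phi p x := by
  rw [← phi_abs]
  rcases le_total |x| 1 with h | h
  · rw [phi_of_le_one (abs_nonneg x) h]
    positivity
  · have h1 : 1 / p ≤ |x| ^ p / p := by gcongr; exact one_le_rpow h hp.le
    rw [phi_of_one_le h]
    linarith

lemma phi_div_sq_of_le_one (ht0 : 0 < t) (ht : t ≤ 1) : phi p t / t ^ 2 = 1 / 2 := by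
  rw [phi_of_le_one ht0.le ht]
  field_simp

lemma phi_sub_rpow_div_two (ht : 1 ≤ t) :
    phi p t - t ^ p / 2 = (t ^ p - 1) * (1 / p - 1 / 2) := by
  rw [phi_of_one_le ht]
  ring

lemma phi_le_rpow_div_two (hp : 2 ≤ p) (ht : 1 ≤ t) : phi p t ≤ t ^ p / 2 := by
  rw [← sub_nonpos, phi_sub_rpow_div_two ht]
  exact mul_nonpos_of_nonneg_of_nonpos (sub_nonneg.2 (one_le_rpow ht (by linarith)))
    (sub_nonpos.2 (one_div_le_one_div_of_le two_pos hp))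

lemma rpow_div_two_le_phi (hp0 : 0 < p) (hp : p ≤ 2) (ht : 1 ≤ t) : t ^ p / 2 ≤ phi p t := by
  rw [← sub_nonneg, phi_sub_rpow_div_two ht]
  exact mul_nonneg (sub_nonneg.2 (one_le_rpow ht hp0.le))
    (sub_nonneg.2 (one_div_le_one_div_of_le hp0 hp))

lemma monotoneOn_phi_div_rpow_of_le_two (hp0 : 0 < p) (hp : p ≤ 2) :
    MonotoneOn (fun t => phi p t / t ^ p) (Ioi 0) := by
  rw [← Ioc_union_Ici_eq_Ioi zero_lt_one]
  refine MonotoneOn.union_right ?_ ?_ (isGreatest_Ioc zero_lt_one) isLeast_Ici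
  · have heq : EqOn (fun t => t ^ (2 - p) / 2) (fun t => phi p t / t ^ p) (Ioc 0 1) := by
      rintro t ⟨ht0, ht1⟩
      dsimp only
      rw [phi_of_le_one ht0.le ht1, rpow_sub ht0, rpow_two]
      ring
    refine MonotoneOn.congr ?_ heq
    intro s hs t _ hst
    exact div_le_div_of_nonneg_right (rpow_le_rpow hs.1.le hst (by linarith)) zero_le_two
  · have heq : EqOn (fun t => 1 / p - (1 / p - 1 / 2) / t ^ p) (fun t => phi p t / t ^ p)
        (Ici 1) := by
      intro t (ht : 1 ≤ t)
      have : 0 < t ^ p := rpow_pos_of_pos (by linarith) p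
      dsimp only
      rw [phi_of_one_le ht]
      field_simp
      ring
    refine MonotoneOn.congr ?_ heq
    intro s (hs : 1 ≤ s) t _ hst
    have h0 : 0 ≤ 1 / p - 1 / 2 := sub_nonneg.2 (one_div_le_one_div_of_le hp0 hp)
    have h1 : 0 < s ^ p := rpow_pos_of_pos (by linarith) p
    have h2 : s ^ p ≤ t ^ p := rpow_le_rpow (by linarith) hst hp0.le
    simp only
    gcongr

lemma monotoneOn_phi_div_sq (hp : 2 ≤ p) : MonotoneOn (fun t => phi p t / t ^ 2) (Ioi 0) := by
  rw [← Ioc_union_Ici_eq_Ioi zero_lt_one]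
  refine MonotoneOn.union_right ?_ ?_ (isGreatest_Ioc zero_lt_one) isLeast_Ici
  · rintro s ⟨hs0, hs1⟩ t ⟨ht0, ht1⟩ -
    simp only [phi_div_sq_of_le_one hs0 hs1, phi_div_sq_of_le_one ht0 ht1, le_refl]
  · intro s (hs : 1 ≤ s) t (ht : 1 ≤ t) hst
    have hs0 : 0 < s := by linarith
    have hp0 : 0 < p := by linarith
    have htan := rpow_add_mul_sub_le_rpow (pow_pos hs0 2) (sq_nonneg t) (q := p / 2) (by linarith)
    rw [← rpow_two, ← rpow_two, ← rpow_mul hs0.le, ← rpow_mul hs0.le,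
      ← rpow_mul (by linarith), show 2 * (p / 2) = p by ring,
      show 2 * (p / 2 - 1) = p - 2 by ring] at htan
    simp only [rpow_two] at htan
    have hS : s ^ (p - 2) * s ^ 2 = s ^ p := by
      rw [← rpow_two, ← rpow_add hs0]; ring_nf
    have hstep : s ^ (p - 2) * (t ^ 2 - s ^ 2) / 2 + phi p s ≤ phi p t := by
      rw [phi_of_one_le hs, phi_of_one_le ht]
      field_simp
      linear_combination 2 * htan
    have hts : 0 ≤ t ^ 2 - s ^ 2 := by nlinarith
    simp only
    rw [div_le_div_iff₀ (by positivity) (by positivity)]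
    calc phi p s * t ^ 2 = phi p s * s ^ 2 + phi p s * (t ^ 2 - s ^ 2) := by ring
      _ ≤ phi p s * s ^ 2 + s ^ p / 2 * (t ^ 2 - s ^ 2) := by
        gcongr
        exact phi_le_rpow_div_two hp hs
      _ = (s ^ (p - 2) * (t ^ 2 - s ^ 2) / 2 + phi p s) * s ^ 2 := by
        rw [← hS]; ring
      _ ≤ phi p t * s ^ 2 := by gcongr

lemma antitoneOn_phi_div_sq (hp0 : 0 < p) (hp : p ≤ 2) :
    AntitoneOn (fun t => phi p t / t ^ 2) (Ioi 0) := by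
  rw [← Ioc_union_Ici_eq_Ioi zero_lt_one]
  refine AntitoneOn.union_right ?_ ?_ (isGreatest_Ioc zero_lt_one) isLeast_Ici
  · rintro s ⟨hs0, hs1⟩ t ⟨ht0, ht1⟩ -
    simp only [phi_div_sq_of_le_one hs0 hs1, phi_div_sq_of_le_one ht0 ht1, le_refl]
  · intro s (hs : 1 ≤ s) t (ht : 1 ≤ t) hst
    have hs0 : 0 < s := by linarith
    have htan := rpow_add_mul_sub_le_rpow (rpow_pos_of_pos hs0 p) (rpow_nonneg (by linarith) p)
      (q := 2 / p) ((one_le_div hp0).2 hp)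
    rw [← rpow_mul hs0.le, ← rpow_mul hs0.le, ← rpow_mul (by linarith),
      show p * (2 / p) = 2 by field_simp, show p * (2 / p - 1) = 2 - p by field_simp] at htan
    simp only [rpow_two] at htan
    have hS : s ^ p * s ^ (2 - p) = s ^ 2 := by
      rw [← rpow_add hs0, ← rpow_two]; ring_nf
    have hφ : phi p t = phi p s + (t ^ p - s ^ p) / p := by
      rw [phi_of_one_le hs, phi_of_one_le ht]; ring
    have hts : 0 ≤ (t ^ p - s ^ p) / p := div_nonneg
      (sub_nonneg.2 (rpow_le_rpow (by linarith) hst hp0.le)) hp0.le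
    simp only
    rw [div_le_div_iff₀ (by positivity) (by positivity)]
    calc phi p t * s ^ 2 = phi p s * s ^ 2 + (t ^ p - s ^ p) / p * (s ^ p * s ^ (2 - p)) := by
          rw [hφ, hS]; ring
      _ ≤ phi p s * s ^ 2 + (t ^ p - s ^ p) / p * (2 * phi p s * s ^ (2 - p)) := by
          gcongr
          linarith [rpow_div_two_le_phi hp0 hp hs]
      _ = phi p s * (s ^ 2 + 2 / p * s ^ (2 - p) * (t ^ p - s ^ p)) := by ring
      _ ≤ phi p s * t ^ 2 := by
          gcongr
          exact phi_nonneg hp0 s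

lemma monotoneOn_phi_div_rpow_min (hp : 0 < p) :
    MonotoneOn (fun t => phi p t / t ^ min p 2) (Ioi 0) := by
  rcases le_total p 2 with h | h
  · rw [min_eq_left h]
    exact monotoneOn_phi_div_rpow_of_le_two hp h
  · simp only [min_eq_right h, rpow_two]
    exact monotoneOn_phi_div_sq h

lemma phi_add_le {x y : ℝ} (hp : 0 < p) (hx : 0 ≤ x) (hy : 0 ≤ y) :
    phi p x + phi p y ≤ phi p ((x ^ min p 2 + y ^ min p 2) ^ (1 / min p 2)) :=
  add_le_of_monotoneOn_div_rpow (lt_min hp two_pos) phi_zero (monotoneOn_phi_div_rpow_min hp)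
    hx hy

lemma monotoneOn_phi_div_self (hp1 : 1 ≤ p) (hp2 : p ≤ 2) :
    MonotoneOn (fun t => phi p t / t) (Ioi 0) := by
  have hmul := (monotoneOn_phi_div_rpow_of_le_two (by linarith) hp2).mul
    (g := fun t => t ^ (p - 1))
    (fun s hs t _ hst => rpow_le_rpow (le_of_lt hs) hst (by linarith))
    (fun t ht => div_nonneg (phi_nonneg (by linarith) t) (rpow_nonneg (le_of_lt ht) p))
    (fun t ht => rpow_nonneg (le_of_lt ht) _)
  refine hmul.congr fun t (ht : 0 < t) => ?_
  simp only [Pi.mul_apply]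
  rw [rpow_sub_one ht.ne', div_mul_div_comm, mul_comm (t ^ p), mul_div_mul_right _ _
    (rpow_pos_of_pos ht p).ne']

lemma sq_div_two_le_phi (hp : 2 ≤ p) (x : ℝ) : x ^ 2 / 2 ≤ phi p x := by
  rw [← phi_abs, ← sq_abs]
  rcases le_total |x| 1 with h | h
  · rw [phi_of_le_one (abs_nonneg x) h]
  · have := monotoneOn_phi_div_sq hp (one_pos : (0:ℝ) < 1) (one_pos.trans_le h) h
    simp only [phi_of_le_one zero_le_one le_rfl] at this
    rw [le_div_iff₀ (by positivity)] at this
    linarith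

end Phi

section Gam

variable {p c D : ℝ}

lemma gam_two (hc : 0 < c) (hD : 0 < D) : gam 2 c D = c := by
  have : 2 * (2 * (D / c) ^ 2 + 1 / 2 - 1 / 2) = (2 * D / c) ^ 2 := by ring
  rw [gam, this, ← sqrt_eq_rpow, sqrt_sq (by positivity)]
  field_simp

lemma gam_mul_eq (hc : 0 < c) (hD : 0 < D) :
    gam p c D * (2 * D / c ^ 2) = (p * (2 * (D / c) ^ 2 + 1 / p - 1 / 2)) ^ (1 / p) := by
  rw [gam]
  field_simp

lemma one_le_gam_radicand (hp : 0 < p) (hc : 0 < c) (hcD : c ≤ D) :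
    1 ≤ p * (2 * (D / c) ^ 2 + 1 / p - 1 / 2) := by
  have hDc : 1 ≤ (D / c) ^ 2 := one_le_pow₀ ((one_le_div hc).2 hcD)
  have : p * (2 * (D / c) ^ 2 + 1 / p - 1 / 2) = 1 + p * (2 * (D / c) ^ 2 - 1 / 2) := by
    field_simp; ring
  rw [this]
  have := mul_nonneg hp.le (by linarith : 0 ≤ 2 * (D / c) ^ 2 - 1 / 2)
  linarith

lemma one_le_gam_mul (hp : 0 < p) (hc : 0 < c) (hcD : c ≤ D) :
    1 ≤ gam p c D * (2 * D / c ^ 2) := by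
  rw [gam_mul_eq hc (hc.trans_le hcD)]
  exact one_le_rpow (one_le_gam_radicand hp hc hcD) (by positivity)

lemma gam_pos (hp : 0 < p) (hc : 0 < c) (hcD : c ≤ D) : 0 < gam p c D :=
  pos_of_mul_pos_left (zero_lt_one.trans_le (one_le_gam_mul hp hc hcD))
    (by have := hc.trans_le hcD; positivity)

lemma phi_gam_mul_two_mul_div_sq (hp : 0 < p) (hc : 0 < c) (hcD : c ≤ D) :
    phi p (gam p c D * (2 * D / c ^ 2)) = 2 * D / c ^ 2 * D := by
  have hD := hc.trans_le hcD
  rw [phi_of_one_le (one_le_gam_mul hp hc hcD), gam_mul_eq hc hD,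
    ← rpow_mul (zero_le_one.trans (one_le_gam_radicand hp hc hcD)),
    one_div_mul_cancel hp.ne', rpow_one]
  field_simp
  ring

lemma min_le_phi_gam_mul_of_le_two {l : ℝ} (hp1 : 1 ≤ p) (hp2 : p ≤ 2) (hc : 0 < c) (hcD : c ≤ D)
    (hl : 0 ≤ l) : min (l ^ 2 * c ^ 2 / 2) (l * D) ≤ phi p (gam p c D * l) := by
  have hp0 : 0 < p := by linarith
  have hD : 0 < D := hc.trans_le hcD
  have hγ := gam_pos hp0 hc hcD
  have hkink := phi_gam_mul_two_mul_div_sq hp0 hc hcD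
  set l₀ := 2 * D / c ^ 2
  have hl₀ : 0 < l₀ := by positivity
  rcases hl.eq_or_lt with rfl | hl
  · simp [phi_zero]
  rcases le_total l l₀ with h | h
  · refine (min_le_left _ _).trans ?_
    have hanti := antitoneOn_phi_div_sq hp0 hp2 (mul_pos hγ hl) (mul_pos hγ hl₀)
      (mul_le_mul_of_nonneg_left h hγ.le)
    simp only at hanti
    rw [hkink, div_le_div_iff₀ (by positivity) (by positivity)] at hanti
    have hpos : 0 < (gam p c D * l₀) ^ 2 := by positivity
    refine le_of_mul_le_mul_right ?_ hpos
    calc l ^ 2 * c ^ 2 / 2 * (gam p c D * l₀) ^ 2 = l₀ * D * (gam p c D * l) ^ 2 := by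
          simp only [l₀]; field_simp
      _ ≤ _ := hanti
  · refine (min_le_right _ _).trans ?_
    have hmono := monotoneOn_phi_div_self hp1 hp2 (mul_pos hγ hl₀) (mul_pos hγ hl)
      (mul_le_mul_of_nonneg_left h hγ.le)
    simp only at hmono
    have e : l₀ * D / (gam p c D * l₀) = l * D / (gam p c D * l) := by field_simp
    rwa [hkink, e, div_le_div_iff_of_pos_right (by positivity)] at hmono

lemma min_le_phi_gam_mul {l : ℝ} (hp : 1 ≤ p) (hc : 0 < c) (hcD : c ≤ D) (hl : 0 ≤ l) :
    min (l ^ 2 * c ^ 2 / 2) (l * D) ≤ phi p (gam (min p 2) c D * l) := by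
  rcases le_total p 2 with h | h
  · rw [min_eq_left h]
    exact min_le_phi_gam_mul_of_le_two hp h hc hcD hl
  · rw [min_eq_right h, gam_two hc (hc.trans_le hcD)]
    calc min (l ^ 2 * c ^ 2 / 2) (l * D) ≤ (c * l) ^ 2 / 2 := by
          rw [mul_pow, mul_comm (c ^ 2)]; exact min_le_left _ _
      _ ≤ phi p (c * l) := sq_div_two_le_phi h _

lemma min_add_phi_le_phi_mul {d₀ : ℝ} (hp : 1 ≤ p) (hc : 0 < c) (hcD : c ≤ D)
    (hd₀ : 0 ≤ d₀) (l : ℝ) :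
    min (l ^ 2 * c ^ 2 / 2) (|l| * D) + phi p (d₀ * l) ≤
      phi p (l * (gam (min p 2) c D ^ min p 2 + d₀ ^ min p 2) ^ (1 / min p 2)) := by
  set r := min p 2
  have hr : 0 < r := lt_min (by linarith) two_pos
  set γ := gam r c D
  have hγ : 0 ≤ γ := (gam_pos hr hc hcD).le
  have hB : 0 ≤ (γ ^ r + d₀ ^ r) ^ (1 / r) := by positivity
  have hscale :
      ((γ * |l|) ^ r + (d₀ * |l|) ^ r) ^ (1 / r) = |l| * (γ ^ r + d₀ ^ r) ^ (1 / r) := by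
    rw [mul_rpow hγ (abs_nonneg l), mul_rpow hd₀ (abs_nonneg l), ← add_mul,
      mul_rpow (by positivity) (by positivity), ← rpow_mul (abs_nonneg l),
      mul_one_div_cancel hr.ne', rpow_one, mul_comm]
  calc min (l ^ 2 * c ^ 2 / 2) (|l| * D) + phi p (d₀ * l)
      = min (|l| ^ 2 * c ^ 2 / 2) (|l| * D) + phi p (d₀ * |l|) := by
        rw [sq_abs, ← phi_abs p (d₀ * l), abs_mul, abs_of_nonneg hd₀]
    _ ≤ phi p (γ * |l|) + phi p (d₀ * |l|) := by
        gcongr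
        exact min_le_phi_gam_mul hp hc hcD (abs_nonneg l)
    _ ≤ phi p (((γ * |l|) ^ r + (d₀ * |l|) ^ r) ^ (1 / r)) :=
        phi_add_le (by linarith) (by positivity) (by positivity)
    _ = phi p (l * (γ ^ r + d₀ ^ r) ^ (1 / r)) := by
        rw [hscale, ← phi_abs p (l * _), abs_mul, abs_of_nonneg hB]

end Gam

lemma exp_mul_le_cosh_add_sinh_mul {x d : ℝ} (hx : |x| ≤ d) (l : ℝ) :
    exp (l * x) ≤ cosh (l * d) + sinh (l * d) / d * x := by
  rcases ((abs_nonneg x).trans hx).eq_or_lt with rfl | hd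
  · simp [abs_nonpos_iff.1 hx]
  obtain ⟨h1, h2⟩ := abs_le.1 hx
  have hconv := convexOn_exp.2 (mem_univ (-(l * d))) (mem_univ (l * d))
    (div_nonneg (by linarith : 0 ≤ d - x) (by positivity : 0 ≤ 2 * d))
    (div_nonneg (by linarith : 0 ≤ d + x) (by positivity : 0 ≤ 2 * d)) (by field_simp; ring)
  simp only [smul_eq_mul] at hconv
  calc exp (l * x) = exp ((d - x) / (2 * d) * -(l * d) + (d + x) / (2 * d) * (l * d)) := by
        congr 1; field_simp; ring
    _ ≤ _ := hconv
    _ = _ := by rw [cosh_eq, sinh_eq]; field_simp; ring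

lemma exp_mul_le_exp_abs_mul_mul_exp {x y b : ℝ} (h : |y - x| ≤ b) (l : ℝ) :
    exp (l * y) ≤ exp (|l| * b) * exp (l * x) := by
  rw [← exp_add, exp_le_exp]
  have : l * (y - x) ≤ |l| * b :=
    (le_abs_self _).trans (by rw [abs_mul]; exact mul_le_mul_of_nonneg_left h (abs_nonneg l))
  linarith

section Conditional

variable {Ω : Type*} {m m₀ : MeasurableSpace Ω} {μ : Measure Ω}

lemma integrable_exp_mul_of_ae_abs_sub_le {X Y : Ω → ℝ} {b l : ℝ}
    (hX : Integrable (fun ω => exp (l * X ω)) μ) (hY : AEStronglyMeasurable Y μ)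
    (h : ∀ᵐ ω ∂μ, |Y ω - X ω| ≤ b) : Integrable (fun ω => exp (l * Y ω)) μ := by
  refine (hX.const_mul (exp (|l| * b))).mono'
    (continuous_exp.comp_aestronglyMeasurable (hY.const_mul l)) ?_
  filter_upwards [h] with ω hω
  rw [norm_of_nonneg (exp_pos _).le]
  exact exp_mul_le_exp_abs_mul_mul_exp hω l

lemma mgf_le_exp_mul_mgf_of_ae_abs_sub_le {X Y : Ω → ℝ} {b l : ℝ}
    (hX : Integrable (fun ω => exp (l * X ω)) μ) (hY : AEStronglyMeasurable Y μ)
    (h : ∀ᵐ ω ∂μ, |Y ω - X ω| ≤ b) : mgf Y μ l ≤ exp (|l| * b) * mgf X μ l := by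
  rw [mgf, mgf, ← integral_const_mul]
  refine integral_mono_ae (integrable_exp_mul_of_ae_abs_sub_le hX hY h) (hX.const_mul _) ?_
  filter_upwards [h] with ω hω
  exact exp_mul_le_exp_abs_mul_mul_exp hω l

lemma condExp_exp_mul_le [IsFiniteMeasure μ] (hm : m ≤ m₀) {Y : Ω → ℝ} {d : ℝ}
    (hY : Integrable Y μ) (hYd : ∀ᵐ ω ∂μ, |Y ω| ≤ d) (hY0 : μ[Y|m] =ᵐ[μ] 0) (l : ℝ) :
    μ[fun ω => exp (l * Y ω)|m] ≤ᵐ[μ] fun _ => exp (l ^ 2 * d ^ 2 / 2) := by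
  set a := cosh (l * d)
  set b := sinh (l * d) / d
  have hexp : Integrable (fun ω => exp (l * Y ω)) μ :=
    integrable_exp_mul_of_mem_Icc hY.aemeasurable (hYd.mono fun ω h => abs_le.1 h)
  have haff : Integrable (fun ω => a + b * Y ω) μ := (integrable_const a).add (hY.const_mul b)
  have hle : μ[fun ω => exp (l * Y ω)|m] ≤ᵐ[μ] μ[fun ω => a + b * Y ω|m] :=
    condExp_mono hexp haff (hYd.mono fun ω h => exp_mul_le_cosh_add_sinh_mul h l)
  have heq : μ[fun ω => a + b * Y ω|m] =ᵐ[μ] fun _ => a := by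
    have hadd := condExp_add (integrable_const a) (hY.const_mul b) m
    filter_upwards [hadd, condExp_smul b Y m, hY0] with ω h1 h2 h3
    simp only [Pi.add_apply, condExp_const hm a] at h1
    change μ[(fun _ => a) + fun x => b * Y x|m] ω = a
    rw [h1]
    change a + μ[b • Y|m] ω = a
    simp [h2, h3]
  filter_upwards [hle, heq] with ω h1 h2
  calc _ ≤ a := h1.trans h2.le
    _ ≤ exp ((l * d) ^ 2 / 2) := cosh_le_exp_half_sq _
    _ = _ := by ring_nf

lemma integral_mul_le_of_condExp_le [IsFiniteMeasure μ] (hm : m ≤ m₀) {f g : Ω → ℝ} {C : ℝ}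
    (hg : StronglyMeasurable[m] g) (hg0 : 0 ≤ g) (hgi : Integrable g μ) (hfi : Integrable f μ)
    (hgf : Integrable (g * f) μ) (hC : μ[f|m] ≤ᵐ[μ] fun _ => C) :
    ∫ ω, g ω * f ω ∂μ ≤ C * ∫ ω, g ω ∂μ := by
  have hpull := condExp_mul_of_stronglyMeasurable_left hg hgf hfi
  calc ∫ ω, g ω * f ω ∂μ = ∫ ω, (μ[g * f|m]) ω ∂μ := (integral_condExp hm).symm
    _ = ∫ ω, g ω * (μ[f|m]) ω ∂μ := integral_congr_ae hpull
    _ ≤ ∫ ω, g ω * C ∂μ := by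
      refine integral_mono_ae (integrable_condExp.congr hpull) (hgi.mul_const C) ?_
      filter_upwards [hC] with ω hω
      exact mul_le_mul_of_nonneg_left hω (hg0 ω)
    _ = C * ∫ ω, g ω ∂μ := by rw [integral_mul_const, mul_comm]

end Conditional

section Martingale

variable {Ω : Type*} {m₀ : MeasurableSpace Ω} {μ : Measure Ω} {ℱ : Filtration ℕ m₀}
  {ξ : ℕ → Ω → ℝ} {d : ℕ → ℝ}

lemma ae_abs_sub_zero_le_sum
    (hd : ∀ i, ∀ᵐ ω ∂μ, |ξ (i + 1) ω - ξ i ω| ≤ d (i + 1)) (n : ℕ) :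
    ∀ᵐ ω ∂μ, |ξ n ω - ξ 0 ω| ≤ ∑ i ∈ Finset.Icc 1 n, d i := by
  filter_upwards [ae_all_iff.2 hd] with ω hω
  induction n with
  | zero => simp
  | succ n ih =>
    rw [Finset.sum_Icc_succ_top (by omega)]
    linarith [abs_sub_le (ξ (n + 1) ω) (ξ n ω) (ξ 0 ω), hω n]

namespace MeasureTheory.Martingale

lemma condExp_succ_sub_eq_zero [IsFiniteMeasure μ] (hξ : Martingale ξ ℱ μ) (k : ℕ) :
    μ[ξ (k + 1) - ξ k|ℱ k] =ᵐ[μ] 0 := by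
  filter_upwards [condExp_sub (hξ.integrable (k + 1)) (hξ.integrable k) (ℱ k),
    hξ.condExp_ae_eq k.le_succ] with ω h1 h2
  rw [h1, Pi.sub_apply, h2, condExp_of_stronglyMeasurable (ℱ.le k) (hξ.stronglyMeasurable k)
    (hξ.integrable k), Pi.zero_apply, sub_self]

lemma mgf_succ_le [IsFiniteMeasure μ] (hξ : Martingale ξ ℱ μ) {k : ℕ} {b l : ℝ}
    (hb : ∀ᵐ ω ∂μ, |ξ (k + 1) ω - ξ k ω| ≤ b)
    (hint : Integrable (fun ω => exp (l * ξ k ω)) μ) :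
    mgf (ξ (k + 1)) μ l ≤ exp (l ^ 2 * b ^ 2 / 2) * mgf (ξ k) μ l := by
  have hY : Integrable (ξ (k + 1) - ξ k) μ := (hξ.integrable (k + 1)).sub (hξ.integrable k)
  have hsplit : (fun ω => exp (l * ξ (k + 1) ω)) =
      (fun ω => exp (l * ξ k ω)) * fun ω => exp (l * (ξ (k + 1) - ξ k) ω) := by
    ext ω; rw [Pi.mul_apply, ← exp_add, Pi.sub_apply]; ring_nf
  have hnext : Integrable (fun ω => exp (l * ξ (k + 1) ω)) μ :=
    integrable_exp_mul_of_ae_abs_sub_le hint (hξ.integrable (k + 1)).aestronglyMeasurable hb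
  rw [mgf, mgf, hsplit]
  refine integral_mul_le_of_condExp_le (ℱ.le k)
    (continuous_exp.comp_stronglyMeasurable ((hξ.stronglyMeasurable k).const_mul l))
    (fun ω => (exp_pos _).le) hint
    (integrable_exp_mul_of_mem_Icc hY.aemeasurable (hb.mono fun ω h => abs_le.1 h))
    (hsplit ▸ hnext) (condExp_exp_mul_le (ℱ.le k) hY hb (hξ.condExp_succ_sub_eq_zero k) l)

lemma mgf_le_exp_mul_mgf_zero [IsFiniteMeasure μ] (hξ : Martingale ξ ℱ μ)
    (hd : ∀ i, ∀ᵐ ω ∂μ, |ξ (i + 1) ω - ξ i ω| ≤ d (i + 1)) {l : ℝ}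
    (h0 : Integrable (fun ω => exp (l * ξ 0 ω)) μ) (n : ℕ) :
    mgf (ξ n) μ l ≤ exp (l ^ 2 * (∑ i ∈ Finset.Icc 1 n, d i ^ 2) / 2) * mgf (ξ 0) μ l := by
  induction n with
  | zero => simp
  | succ n ih =>
    have hint := integrable_exp_mul_of_ae_abs_sub_le h0 (hξ.integrable n).aestronglyMeasurable
      (ae_abs_sub_zero_le_sum hd n)
    calc mgf (ξ (n + 1)) μ l ≤ exp (l ^ 2 * d (n + 1) ^ 2 / 2) * mgf (ξ n) μ l :=
          hξ.mgf_succ_le (hd n) hint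
      _ ≤ exp (l ^ 2 * d (n + 1) ^ 2 / 2) *
          (exp (l ^ 2 * (∑ i ∈ Finset.Icc 1 n, d i ^ 2) / 2) * mgf (ξ 0) μ l) := by gcongr
      _ = _ := by
        rw [Finset.sum_Icc_succ_top (by omega), ← mul_assoc, ← exp_add]
        ring_nf

lemma cgf_le_min_add_cgf_zero [IsProbabilityMeasure μ] (hξ : Martingale ξ ℱ μ)
    (hd : ∀ i, ∀ᵐ ω ∂μ, |ξ (i + 1) ω - ξ i ω| ≤ d (i + 1)) {l : ℝ}
    (h0 : Integrable (fun ω => exp (l * ξ 0 ω)) μ) (n : ℕ) :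
    cgf (ξ n) μ l ≤ min (l ^ 2 * (∑ i ∈ Finset.Icc 1 n, d i ^ 2) / 2)
      (|l| * ∑ i ∈ Finset.Icc 1 n, d i) + cgf (ξ 0) μ l := by
  have hmeas := (hξ.integrable n).aestronglyMeasurable
  have htel := ae_abs_sub_zero_le_sum hd n
  have hM := mgf_pos h0
  rw [cgf, cgf, ← log_exp (min _ _), ← log_mul (exp_pos _).ne' hM.ne',
    exp_monotone.map_min, min_mul_of_nonneg _ _ hM.le]
  exact log_le_log (mgf_pos (integrable_exp_mul_of_ae_abs_sub_le h0 hmeas htel))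
    (le_min (hξ.mgf_le_exp_mul_mgf_zero hd h0 n)
      (mgf_le_exp_mul_mgf_of_ae_abs_sub_le h0 hmeas htel))

end MeasureTheory.Martingale

end Martingale

theorem stmt_18 {Ω : Type*} {m : MeasurableSpace Ω} (μ : Measure Ω) [IsProbabilityMeasure μ]
    (p : ℝ) (hp : 1 < p)
    (ℱ : Filtration ℕ m) (ξ : ℕ → Ω → ℝ) (hmart : Martingale ξ ℱ μ)
    (d : ℕ → ℝ) (d₀ : ℝ) (hd₀ : 0 ≤ d₀)
    (n : ℕ) (hn : 1 ≤ n) (hdpos : ∀ i ∈ Finset.Icc 1 n, 0 < d i)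
    (hξ₀ : ∀ l : ℝ, Real.log (∫ ω, Real.exp (l * ξ 0 ω) ∂μ) ≤ phi p (d₀ * l))
    (hincr : ∀ i : ℕ, ∀ᵐ ω ∂μ, |ξ (i + 1) ω - ξ i ω| ≤ d (i + 1)) :
    ∀ l : ℝ, Real.log (∫ ω, Real.exp (l * ξ n ω) ∂μ) ≤
      phi p (l *
        (gam (min p 2) (Real.sqrt (∑ i ∈ Finset.Icc 1 n, d i ^ 2)) (∑ i ∈ Finset.Icc 1 n, d i)
            ^ min p 2 + d₀ ^ min p 2) ^ (1 / min p 2)) := by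
  intro l
  change cgf (ξ n) μ l ≤ _
  by_cases h0 : Integrable (fun ω => exp (l * ξ 0 ω)) μ
  · have hne : (Finset.Icc 1 n).Nonempty := ⟨1, Finset.mem_Icc.2 ⟨le_rfl, hn⟩⟩
    have hD : 0 < ∑ i ∈ Finset.Icc 1 n, d i := Finset.sum_pos hdpos hne
    have hc2 : 0 < ∑ i ∈ Finset.Icc 1 n, d i ^ 2 :=
      Finset.sum_pos (fun i hi => pow_pos (hdpos i hi) 2) hne
    have hcD : √(∑ i ∈ Finset.Icc 1 n, d i ^ 2) ≤ ∑ i ∈ Finset.Icc 1 n, d i :=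
      (sqrt_le_sqrt (Finset.sum_sq_le_sq_sum_of_nonneg fun i hi => (hdpos i hi).le)).trans_eq
        (sqrt_sq hD.le)
    calc cgf (ξ n) μ l
        ≤ min (l ^ 2 * (∑ i ∈ Finset.Icc 1 n, d i ^ 2) / 2) (|l| * ∑ i ∈ Finset.Icc 1 n, d i) +
          cgf (ξ 0) μ l := hmart.cgf_le_min_add_cgf_zero hincr h0 n
      _ ≤ min (l ^ 2 * √(∑ i ∈ Finset.Icc 1 n, d i ^ 2) ^ 2 / 2)
            (|l| * ∑ i ∈ Finset.Icc 1 n, d i) + phi p (d₀ * l) := by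
          rw [sq_sqrt hc2.le]
          exact add_le_add_right (hξ₀ l) _
      _ ≤ _ := min_add_phi_le_phi_mul hp.le (sqrt_pos.2 hc2) hcD hd₀ l
  · have hint : ¬Integrable (fun ω => exp (l * ξ n ω)) μ := fun h =>
      h0 (integrable_exp_mul_of_ae_abs_sub_le h (hmart.integrable 0).aestronglyMeasurable
        ((ae_abs_sub_zero_le_sum hincr n).mono fun ω hω => by rwa [abs_sub_comm]))
    rw [cgf, mgf, integral_undef hint, log_zero]
    exact phi_nonneg (by linarith) _
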